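/- arXiv:2005.09139 — 9 statements merged into one kernel-verified Lean document; each statement's English description precedes it below -/
import Mathlib

section
/- Let K ≥ 1, let h_1,…,h_K > 0, σ² > 0 and P > 0 be real numbers. Then the infimum over g ∈ ℝ and b ∈ ℝ^K with ∑_{k=1}^K b_k² ≤ P of ∑_{k=1}^K (g h_k b_k − 1)² + σ² g² equals the infimum over t ∈ ℝ^K of ∑_{k=1}^K (h_k t_k − 1)² + (σ²/P) ∑_{k=1}^K t_k². That is, the sum-power-constrained MSE minimization problem is equivalent, after the substitution t_k = g b_k, to the unconstrained convex problem. -/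
/-! Substituting `t = g • b` turns the objective into `∑ k, (h k * t k - 1) ^ 2 + σ² g²`, and
the power constraint `∑ k, b k ^ 2 ≤ P` gives `σ² g² ≥ σ² / P * ∑ k, t k ^ 2`. So every feasible
`(g, b)` is dominated by the unconstrained objective at `t = g • b`, and conversely every `t` is
attained with equality by `g = √(∑ k, t k ^ 2 / P)`, `b = g⁻¹ • t`. -/

open Finset

namespace AirComp

variable {ι : Type*} [Fintype ι]

def sumPower (b : ι → ℝ) : ℝ := ∑ k, b k ^ 2

def computationMSE (h : ι → ℝ) (σ2 g : ℝ) (b : ι → ℝ) : ℝ :=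
  ∑ k, (g * h k * b k - 1) ^ 2 + σ2 * g ^ 2

noncomputable def relaxedMSE (h : ι → ℝ) (σ2 P : ℝ) (t : ι → ℝ) : ℝ :=
  ∑ k, (h k * t k - 1) ^ 2 + σ2 / P * sumPower t

lemma sumPower_nonneg (b : ι → ℝ) : 0 ≤ sumPower b :=
  sum_nonneg fun k _ ↦ sq_nonneg (b k)

lemma sumPower_eq_zero_iff {b : ι → ℝ} : sumPower b = 0 ↔ b = 0 := by
  simp only [sumPower, sum_eq_zero_iff_of_nonneg fun k _ ↦ sq_nonneg (b k), mem_univ,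
    true_imp_iff, pow_eq_zero_iff two_ne_zero, funext_iff, Pi.zero_apply]

lemma sumPower_smul (c : ℝ) (b : ι → ℝ) : sumPower (c • b) = c ^ 2 * sumPower b := by
  simp only [sumPower, Pi.smul_apply, smul_eq_mul, mul_sum, mul_pow]

lemma relaxedMSE_smul (h : ι → ℝ) (σ2 P g : ℝ) (b : ι → ℝ) :
    relaxedMSE h σ2 P (g • b) =
      computationMSE h σ2 g b + σ2 / P * sumPower (g • b) - σ2 * g ^ 2 := by
  have hprod : ∀ k, h k * (g • b) k = g * h k * b k := fun k ↦ by
    rw [Pi.smul_apply, smul_eq_mul]; ring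
  simp only [relaxedMSE, computationMSE, hprod]
  ring

lemma relaxedMSE_smul_le {σ2 P : ℝ} (hσ2 : 0 ≤ σ2) (hP : 0 < P) (h : ι → ℝ) (g : ℝ)
    {b : ι → ℝ} (hb : sumPower b ≤ P) :
    relaxedMSE h σ2 P (g • b) ≤ computationMSE h σ2 g b := by
  have hpower : σ2 / P * (g ^ 2 * sumPower b) ≤ σ2 / P * (g ^ 2 * P) := by gcongr
  have hcancel : σ2 / P * (g ^ 2 * P) = σ2 * g ^ 2 := by field_simp
  rw [relaxedMSE_smul, sumPower_smul]
  linarith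

lemma computationMSE_eq_relaxedMSE_smul {P : ℝ} (hP : P ≠ 0) (h : ι → ℝ) (σ2 g : ℝ)
    {b : ι → ℝ} (hb : sumPower (g • b) = g ^ 2 * P) :
    computationMSE h σ2 g b = relaxedMSE h σ2 P (g • b) := by
  rw [relaxedMSE_smul, hb]
  field_simp
  ring

lemma exists_smul_eq_sumPower_le {P : ℝ} (hP : 0 < P) (t : ι → ℝ) :
    ∃ (g : ℝ) (b : ι → ℝ), sumPower b ≤ P ∧ g • b = t ∧ sumPower t = g ^ 2 * P := by
  rcases eq_or_ne t 0 with rfl | ht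
  · exact ⟨0, 0, by simpa [sumPower] using hP.le, by simp, by simp [sumPower]⟩
  have hs : 0 < sumPower t :=
    (sumPower_nonneg t).lt_of_ne (Ne.symm (sumPower_eq_zero_iff.not.mpr ht))
  set g := √(sumPower t / P)
  have hg : 0 < g := Real.sqrt_pos.mpr (by positivity)
  have hg2 : g ^ 2 = sumPower t / P := Real.sq_sqrt (by positivity)
  refine ⟨g, g⁻¹ • t, le_of_eq ?_, smul_inv_smul₀ hg.ne' t, by rw [hg2]; field_simp⟩
  rw [sumPower_smul, inv_pow, hg2]
  field_simp

end AirComp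

open AirComp in
theorem aircomp_sum_power_problem_equiv_general (K : ℕ) (h : Fin K → ℝ)
    (σ2 P : ℝ) (hσ2 : 0 < σ2) (hP : 0 < P) :
    sInf {m : ℝ | ∃ (g : ℝ) (b : Fin K → ℝ), (∑ k, b k ^ 2) ≤ P ∧
        m = (∑ k, (g * h k * b k - 1) ^ 2) + σ2 * g ^ 2}
      = sInf {m : ℝ | ∃ t : Fin K → ℝ,
        m = (∑ k, (h k * t k - 1) ^ 2) + σ2 / P * ∑ k, t k ^ 2} := by
  refine csInf_eq_csInf_of_forall_exists_le ?_ ?_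
  · rintro _ ⟨g, b, hb, rfl⟩
    exact ⟨_, ⟨g • b, rfl⟩, relaxedMSE_smul_le hσ2.le hP h g hb⟩
  · rintro _ ⟨t, rfl⟩
    obtain ⟨g, b, hb, rfl, ht⟩ := exists_smul_eq_sumPower_le hP t
    exact ⟨_, ⟨g, b, hb, rfl⟩, (computationMSE_eq_relaxedMSE_smul hP.ne' h σ2 g ht).le⟩

/-- The sum-power-constrained MSE minimization problem is equivalent,
after the substitution `t k = g * b k`, to the unconstrained convex problem: the infimum
over `g, b` with `∑ k (b k)² ≤ P` of `∑ k (g h k b k − 1)² + σ² g²` equals the infimum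
over `t` of `∑ k (h k t k − 1)² + (σ²/P) ∑ k (t k)²`. -/
theorem aircomp_sum_power_problem_equiv (K : ℕ) (hK : 1 ≤ K) (h : Fin K → ℝ)
    (hh : ∀ k, 0 < h k) (σ2 P : ℝ) (hσ2 : 0 < σ2) (hP : 0 < P) :
    sInf {m : ℝ | ∃ (g : ℝ) (b : Fin K → ℝ), (∑ k, b k ^ 2) ≤ P ∧
        m = (∑ k, (g * h k * b k - 1) ^ 2) + σ2 * g ^ 2}
      = sInf {m : ℝ | ∃ t : Fin K → ℝ,
        m = (∑ k, (h k * t k - 1) ^ 2) + σ2 / P * ∑ k, t k ^ 2} :=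
  aircomp_sum_power_problem_equiv_general K h σ2 P hσ2 hP
end

section
/- Let h_1,…,h_K > 0, σ > 0 and P > 0. Define g* = sqrt((1/P) ∑_{k=1}^K (P h_k/(σ² + P h_k²))²) and b*_k = (P h_k/(σ² + P h_k²)) · sqrt(P / ∑_{j=1}^K (P h_j/(σ² + P h_j²))²) for each k. Then ∑_{k=1}^K (b*_k)² = P and ∑_{k=1}^K (g* h_k b*_k − 1)² + σ² (g*)² = ∑_{k=1}^K σ²/(σ² + P h_k²). -/
/-! With `c k = P h k / (σ² + P h k²)` and `S = ∑ c k²`, the transmit factors are `c` rescaled to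
power exactly `P`, and the receive factor is the reciprocal scale, so `g* b*_k = c k`. The MSE then
splits into per-user terms `(c k h k - 1)² + (σ² / P) c k²`; since `c k h k - 1 = -σ² / D` with
`D = σ² + P h k²`, each equals `σ² (σ² + P h k²) / D² = σ² / D`. -/

open Finset Real

theorem sum_sq_mul_sqrt_div_sum_sq {ι : Type*} [Fintype ι] {P : ℝ} (hP : 0 ≤ P) {c : ι → ℝ}
    (hc : ∑ i, c i ^ 2 ≠ 0) :
    ∑ i, (c i * √(P / ∑ j, c j ^ 2)) ^ 2 = P := by
  have hPS : 0 ≤ P / ∑ j, c j ^ 2 := div_nonneg hP (sum_nonneg fun j _ => sq_nonneg (c j))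
  simp_rw [mul_pow, sq_sqrt hPS, ← sum_mul]
  field_simp

theorem sqrt_one_div_mul_mul_sqrt_div {P S : ℝ} (hP : 0 < P) (hS : 0 < S) :
    √(1 / P * S) * √(P / S) = 1 := by
  rw [← sqrt_mul (by positivity), show 1 / P * S * (P / S) = 1 by field_simp, sqrt_one]

theorem regularized_inversion_mse {σ P h : ℝ} (hD : σ ^ 2 + P * h ^ 2 ≠ 0) :
    (P * h / (σ ^ 2 + P * h ^ 2) * h - 1) ^ 2 + σ ^ 2 / P * (P * h / (σ ^ 2 + P * h ^ 2)) ^ 2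
      = σ ^ 2 / (σ ^ 2 + P * h ^ 2) := by
  field_simp
  ring

theorem aircomp_theorem1_attainment_general (K : ℕ) (hK : 1 ≤ K) (h : Fin K → ℝ)
    (hh : ∀ k, 0 < h k) (σ P : ℝ) (hP : 0 < P)
    (gstar : ℝ) (bstar : Fin K → ℝ)
    (hg : gstar = Real.sqrt ((1 / P) * ∑ k, (P * h k / (σ ^ 2 + P * h k ^ 2)) ^ 2))
    (hb : ∀ k, bstar k = (P * h k / (σ ^ 2 + P * h k ^ 2)) *
        Real.sqrt (P / ∑ j, (P * h j / (σ ^ 2 + P * h j ^ 2)) ^ 2)) :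
    (∑ k, bstar k ^ 2) = P
    ∧ (∑ k, (gstar * h k * bstar k - 1) ^ 2) + σ ^ 2 * gstar ^ 2
        = ∑ k, σ ^ 2 / (σ ^ 2 + P * h k ^ 2) := by
  set c : Fin K → ℝ := fun k => P * h k / (σ ^ 2 + P * h k ^ 2)
  have hD : ∀ k, 0 < σ ^ 2 + P * h k ^ 2 := fun k => by have := hh k; positivity
  have hS : 0 < ∑ k, c k ^ 2 :=
    sum_pos (fun k _ => pow_pos (div_pos (mul_pos hP (hh k)) (hD k)) 2) ⟨⟨0, hK⟩, mem_univ _⟩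
  have hgb : ∀ k, gstar * bstar k = c k := fun k => by
    rw [hg, hb, mul_left_comm, sqrt_one_div_mul_mul_sqrt_div hP hS, mul_one]
  have hnoise : σ ^ 2 * gstar ^ 2 = ∑ k, σ ^ 2 / P * c k ^ 2 := by
    rw [hg, sq_sqrt (by positivity), ← mul_sum]
    ring
  refine ⟨by simp only [hb]; exact sum_sq_mul_sqrt_div_sum_sq hP.le hS.ne', ?_⟩
  rw [hnoise, ← sum_add_distrib]
  refine sum_congr rfl fun k _ => ?_
  rw [mul_right_comm, hgb]
  exact regularized_inversion_mse (hD k).ne'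

/-- The optimal scaling factors of Theorem 1 use the full power budget
and achieve MSE `∑ k σ²/(σ² + P (h k)²)`:  with
`g* = sqrt((1/P) ∑ k (P h k/(σ² + P h k²))²)` and
`b* k = (P h k/(σ² + P h k²)) · sqrt(P / ∑ j (P h j/(σ² + P h j²))²)` one has
`∑ k (b* k)² = P` and `∑ k (g* h k b* k − 1)² + σ² g*² = ∑ k σ²/(σ² + P h k²)`. -/
theorem aircomp_theorem1_attainment (K : ℕ) (hK : 1 ≤ K) (h : Fin K → ℝ)
    (hh : ∀ k, 0 < h k) (σ P : ℝ) (hσ : 0 < σ) (hP : 0 < P)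
    (gstar : ℝ) (bstar : Fin K → ℝ)
    (hg : gstar = Real.sqrt ((1 / P) * ∑ k, (P * h k / (σ ^ 2 + P * h k ^ 2)) ^ 2))
    (hb : ∀ k, bstar k = (P * h k / (σ ^ 2 + P * h k ^ 2)) *
        Real.sqrt (P / ∑ j, (P * h j / (σ ^ 2 + P * h j ^ 2)) ^ 2)) :
    (∑ k, bstar k ^ 2) = P
    ∧ (∑ k, (gstar * h k * bstar k - 1) ^ 2) + σ ^ 2 * gstar ^ 2
        = ∑ k, σ ^ 2 / (σ ^ 2 + P * h k ^ 2) :=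
  aircomp_theorem1_attainment_general K hK h hh σ P hP gstar bstar hg hb
end

section
/- (Theorem 1) Let h_1,…,h_K > 0, σ² > 0, P > 0. Then ∑_{k=1}^K σ²/(σ² + P h_k²) is the least element of the set { ∑_{k=1}^K (g h_k b_k − 1)² + σ² g² : g ∈ ℝ, b ∈ ℝ^K, ∑_{k=1}^K b_k² ≤ P }; i.e., every feasible (g, b) has MSE at least ∑_{k=1}^K σ²/(σ² + P h_k²), and this value is attained (at g* = sqrt((1/P)∑_k (P h_k/(σ²+P h_k²))²) and b*_k = (P h_k/(σ²+P h_k²))·sqrt(P/∑_j (P h_j/(σ²+P h_j²))²)). -/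
/-!
With `d = σ² + P h²` and `c = P h / d`, completing the square gives
`(h x - 1)² + σ² x² / P = σ² / d + (d / P) (x - c)²`. Since `∑ b_k² ≤ P`, we have
`σ² g² ≥ ∑ σ² (g b_k)² / P`, so the MSE dominates the sum of these quadratics at `x_k = g b_k`,
hence `∑ σ² / d_k`. At the stated point `g b_k = c_k` and `P g² = ∑ c_k²`, so both inequalities
are equalities.
-/

open Finset

section OneUser

variable {σ2 P : ℝ}

theorem sq_mul_sub_one_add_div_eq (h x : ℝ) (hP : P ≠ 0) (hd : σ2 + P * h ^ 2 ≠ 0) :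
    (h * x - 1) ^ 2 + σ2 * x ^ 2 / P
      = σ2 / (σ2 + P * h ^ 2) + (σ2 + P * h ^ 2) / P * (x - P * h / (σ2 + P * h ^ 2)) ^ 2 := by
  generalize hd_def : σ2 + P * h ^ 2 = d at hd ⊢
  obtain rfl : σ2 = d - P * h ^ 2 := by rw [← hd_def]; ring
  field_simp
  ring

theorem div_le_sq_mul_sub_one_add_div (h x : ℝ) (hσ2 : 0 < σ2) (hP : 0 < P) :
    σ2 / (σ2 + P * h ^ 2) ≤ (h * x - 1) ^ 2 + σ2 * x ^ 2 / P := by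
  have hd : 0 < σ2 + P * h ^ 2 := by positivity
  rw [sq_mul_sub_one_add_div_eq h x hP.ne' hd.ne']
  exact le_add_of_nonneg_right (by positivity)

theorem sq_mul_sub_one_add_div_eq_at_minimizer (h : ℝ) (hσ2 : 0 < σ2) (hP : 0 < P) :
    (h * (P * h / (σ2 + P * h ^ 2)) - 1) ^ 2 + σ2 * (P * h / (σ2 + P * h ^ 2)) ^ 2 / P
      = σ2 / (σ2 + P * h ^ 2) := by
  have hd : 0 < σ2 + P * h ^ 2 := by positivity
  rw [sq_mul_sub_one_add_div_eq h _ hP.ne' hd.ne', sub_self, zero_pow two_ne_zero, mul_zero,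
    add_zero]

end OneUser

section MSE

variable {ι : Type*} [Fintype ι] (h : ι → ℝ) {σ2 P : ℝ}

theorem sum_sq_mul_sub_one_add_div_eq (g : ℝ) (b : ι → ℝ) :
    ∑ k, ((h k * (g * b k) - 1) ^ 2 + σ2 * (g * b k) ^ 2 / P)
      = (∑ k, (g * h k * b k - 1) ^ 2) + σ2 * (∑ k, (g * b k) ^ 2) / P := by
  rw [sum_add_distrib, mul_sum, sum_div]
  congr 1
  exact sum_congr rfl fun k _ => by ring

theorem sum_div_le_mse (hσ2 : 0 < σ2) (hP : 0 < P) (g : ℝ) (b : ι → ℝ)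
    (hb : ∑ k, b k ^ 2 ≤ P) :
    ∑ k, σ2 / (σ2 + P * h k ^ 2) ≤ (∑ k, (g * h k * b k - 1) ^ 2) + σ2 * g ^ 2 := by
  have hpower : σ2 * (∑ k, (g * b k) ^ 2) / P ≤ σ2 * g ^ 2 := by
    simp only [mul_pow, ← mul_sum]
    rw [← mul_assoc, mul_div_assoc]
    exact mul_le_of_le_one_right (by positivity) (div_le_one_of_le₀ hb hP.le)
  calc ∑ k, σ2 / (σ2 + P * h k ^ 2)
      ≤ ∑ k, ((h k * (g * b k) - 1) ^ 2 + σ2 * (g * b k) ^ 2 / P) :=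
        sum_le_sum fun k _ => div_le_sq_mul_sub_one_add_div (h k) _ hσ2 hP
    _ = (∑ k, (g * h k * b k - 1) ^ 2) + σ2 * (∑ k, (g * b k) ^ 2) / P :=
        sum_sq_mul_sub_one_add_div_eq h g b
    _ ≤ (∑ k, (g * h k * b k - 1) ^ 2) + σ2 * g ^ 2 := by gcongr

theorem mse_eq_sum_div (hσ2 : 0 < σ2) (hP : 0 < P) (g : ℝ) (b : ι → ℝ)
    (hgb : ∀ k, g * b k = P * h k / (σ2 + P * h k ^ 2))
    (hg : P * g ^ 2 = ∑ k, (g * b k) ^ 2) :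
    (∑ k, (g * h k * b k - 1) ^ 2) + σ2 * g ^ 2 = ∑ k, σ2 / (σ2 + P * h k ^ 2) := by
  have hnoise : σ2 * g ^ 2 = σ2 * (∑ k, (g * b k) ^ 2) / P := by
    rw [← hg, mul_left_comm, mul_div_cancel_left₀ _ hP.ne']
  rw [hnoise, ← sum_sq_mul_sub_one_add_div_eq]
  refine sum_congr rfl fun k _ => ?_
  rw [hgb k]
  exact sq_mul_sub_one_add_div_eq_at_minimizer (h k) hσ2 hP

end MSE

section Normalization

variable {ι : Type*} [Fintype ι] (c : ι → ℝ) {P : ℝ}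

theorem sqrt_mul_mul_sqrt_div_sum_sq (hP : 0 < P) (k : ι) :
    √((1 / P) * ∑ j, c j ^ 2) * (c k * √(P / ∑ j, c j ^ 2)) = c k := by
  by_cases hS : ∑ j, c j ^ 2 = 0
  · have hck : c k = 0 :=
      pow_eq_zero_iff two_ne_zero |>.mp <|
        (sum_eq_zero_iff_of_nonneg fun j _ => sq_nonneg (c j)).mp hS k (mem_univ k)
    simp [hck]
  · have hS' : 0 < ∑ j, c j ^ 2 := lt_of_le_of_ne (by positivity) (Ne.symm hS)
    rw [mul_left_comm, ← Real.sqrt_mul (by positivity),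
      show (1 / P * ∑ j, c j ^ 2) * (P / ∑ j, c j ^ 2) = 1 by field_simp, Real.sqrt_one, mul_one]

theorem sum_sq_mul_sqrt_div_sum_sq_le (hP : 0 ≤ P) :
    ∑ k, (c k * √(P / ∑ j, c j ^ 2)) ^ 2 ≤ P := by
  simp only [mul_pow, ← sum_mul]
  rw [Real.sq_sqrt (by positivity)]
  by_cases hS : ∑ j, c j ^ 2 = 0
  · simp [hS, hP]
  · exact (mul_div_cancel₀ P hS).le

end Normalization

theorem aircomp_theorem1_general (K : ℕ) (h : Fin K → ℝ)
    (σ2 P : ℝ) (hσ2 : 0 < σ2) (hP : 0 < P) :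
    IsLeast {m : ℝ | ∃ (g : ℝ) (b : Fin K → ℝ), (∑ k, b k ^ 2) ≤ P ∧
        m = (∑ k, (g * h k * b k - 1) ^ 2) + σ2 * g ^ 2}
      (∑ k, σ2 / (σ2 + P * h k ^ 2))
    ∧ (∑ k, ((Real.sqrt ((1 / P) * ∑ j, (P * h j / (σ2 + P * h j ^ 2)) ^ 2)) * h k *
          ((P * h k / (σ2 + P * h k ^ 2)) *
            Real.sqrt (P / ∑ j, (P * h j / (σ2 + P * h j ^ 2)) ^ 2)) - 1) ^ 2)
        + σ2 * (Real.sqrt ((1 / P) * ∑ j, (P * h j / (σ2 + P * h j ^ 2)) ^ 2)) ^ 2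
        = ∑ k, σ2 / (σ2 + P * h k ^ 2)
    ∧ (∑ k, ((P * h k / (σ2 + P * h k ^ 2)) *
          Real.sqrt (P / ∑ j, (P * h j / (σ2 + P * h j ^ 2)) ^ 2)) ^ 2) ≤ P := by
  set c : Fin K → ℝ := fun k => P * h k / (σ2 + P * h k ^ 2)
  set S := ∑ j, c j ^ 2
  have hgb (k : Fin K) : √((1 / P) * S) * (c k * √(P / S)) = c k :=
    sqrt_mul_mul_sqrt_div_sum_sq c hP k
  have hg : P * √((1 / P) * S) ^ 2 = ∑ k, (√((1 / P) * S) * (c k * √(P / S))) ^ 2 := by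
    rw [Real.sq_sqrt (by positivity), ← mul_assoc, mul_one_div_cancel hP.ne', one_mul]
    exact sum_congr rfl fun k _ => by rw [hgb k]
  have hattain := mse_eq_sum_div h hσ2 hP _ (fun k => c k * √(P / S)) hgb hg
  have hpower : ∑ k, (c k * √(P / S)) ^ 2 ≤ P := sum_sq_mul_sqrt_div_sum_sq_le c hP.le
  refine ⟨⟨⟨_, _, hpower, hattain.symm⟩, ?_⟩, hattain, hpower⟩
  rintro _ ⟨g, b, hb, rfl⟩
  exact sum_div_le_mse h hσ2 hP g b hb

/-- **Theorem 1.** `∑ k σ²/(σ² + P h k²)` is the least element of the set of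
achievable MSE values under the sum-power constraint `∑ k (b k)² ≤ P`, and it is attained
at `g* = sqrt((1/P) ∑ k (P h k/(σ² + P h k²))²)` and
`b* k = (P h k/(σ² + P h k²)) · sqrt(P / ∑ j (P h j/(σ² + P h j²))²)`. -/
theorem aircomp_theorem1 (K : ℕ) (h : Fin K → ℝ) (hh : ∀ k, 0 < h k)
    (σ2 P : ℝ) (hσ2 : 0 < σ2) (hP : 0 < P) :
    IsLeast {m : ℝ | ∃ (g : ℝ) (b : Fin K → ℝ), (∑ k, b k ^ 2) ≤ P ∧
        m = (∑ k, (g * h k * b k - 1) ^ 2) + σ2 * g ^ 2}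
      (∑ k, σ2 / (σ2 + P * h k ^ 2))
    ∧ (∑ k, ((Real.sqrt ((1 / P) * ∑ j, (P * h j / (σ2 + P * h j ^ 2)) ^ 2)) * h k *
          ((P * h k / (σ2 + P * h k ^ 2)) *
            Real.sqrt (P / ∑ j, (P * h j / (σ2 + P * h j ^ 2)) ^ 2)) - 1) ^ 2)
        + σ2 * (Real.sqrt ((1 / P) * ∑ j, (P * h j / (σ2 + P * h j ^ 2)) ^ 2)) ^ 2
        = ∑ k, σ2 / (σ2 + P * h k ^ 2)
    ∧ (∑ k, ((P * h k / (σ2 + P * h k ^ 2)) *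
          Real.sqrt (P / ∑ j, (P * h j / (σ2 + P * h j ^ 2)) ^ 2)) ^ 2) ≤ P :=
  aircomp_theorem1_general K h σ2 P hσ2 hP
end

section
/- Let h_1,…,h_K > 0, σ² > 0, P > 0. The sum-power constraint is active at every optimum: if g ∈ ℝ and b ∈ ℝ^K satisfy ∑_{k=1}^K b_k² ≤ P and ∑_{k=1}^K (g h_k b_k − 1)² + σ² g² = ∑_{k=1}^K σ²/(σ² + P h_k²) (the minimum MSE), then necessarily ∑_{k=1}^K b_k² = P. -/
/-- Pointwise key inequality: for `c > 0`, `h > 0`,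
`(h*x - 1)^2 + c*x^2 ≥ c/(h^2 + c)`. -/
lemma aircomp_pointwise (c hk x : ℝ) (hc : 0 < c) (hhk : 0 < hk) :
    c / (hk ^ 2 + c) ≤ (hk * x - 1) ^ 2 + c * x ^ 2 := by
  have hd : 0 < hk ^ 2 + c := by positivity
  rw [div_le_iff₀ hd]
  nlinarith [sq_nonneg ((hk ^ 2 + c) * x - hk)]

/-- Monotonicity: if `S < P` then `σ2/(σ2 + P h²) < σ2/(σ2 + S h²)`. -/
lemma aircomp_mono (σ2 S P hk : ℝ) (hσ2 : 0 < σ2) (hS : 0 ≤ S) (hSP : S < P)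
    (hhk : 0 < hk) : σ2 / (σ2 + P * hk ^ 2) < σ2 / (σ2 + S * hk ^ 2) := by
  apply div_lt_div_of_pos_left hσ2 (by positivity)
  nlinarith [pow_pos hhk 2]

/-- The sum-power constraint is active at every optimum: if `(g, b)` is
feasible (`∑ k (b k)² ≤ P`) and achieves the minimum MSE `∑ k σ²/(σ² + P h k²)`, then
`∑ k (b k)² = P`. -/
theorem aircomp_power_constraint_active (K : ℕ) (hK : 1 ≤ K) (h : Fin K → ℝ) (hh : ∀ k, 0 < h k)
    (σ2 P : ℝ) (hσ2 : 0 < σ2) (hP : 0 < P) (g : ℝ) (b : Fin K → ℝ)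
    (hfeas : (∑ k, b k ^ 2) ≤ P)
    (hopt : (∑ k, (g * h k * b k - 1) ^ 2) + σ2 * g ^ 2
        = ∑ k, σ2 / (σ2 + P * h k ^ 2)) :
    (∑ k, b k ^ 2) = P := by
  set S : ℝ := ∑ k, b k ^ 2 with hSdef
  have hS0 : 0 ≤ S := Finset.sum_nonneg fun k _ => sq_nonneg _
  by_contra hne
  have hSP : S < P := lt_of_le_of_ne hfeas hne
  have : Nonempty (Fin K) := Fin.pos_iff_nonempty.mp hK
  have hne' : Finset.univ.Nonempty (α := Fin K) := Finset.univ_nonempty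
  -- lower bound: MSE ≥ ∑ σ2/(σ2 + S h²)
  have hlow : (∑ k, σ2 / (σ2 + S * h k ^ 2))
      ≤ (∑ k, (g * h k * b k - 1) ^ 2) + σ2 * g ^ 2 := by
    rcases eq_or_lt_of_le hS0 with hS0' | hSpos
    · -- S = 0, hence every b k = 0
      have hb : ∀ k ∈ Finset.univ, b k ^ 2 = 0 := by
        intro k _
        have := (Finset.sum_eq_zero_iff_of_nonneg
          (fun k _ => sq_nonneg (b k))).mp hS0'.symm
        exact this k (Finset.mem_univ k)
      have hb' : ∀ k : Fin K, b k = 0 := fun k =>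
        sq_eq_zero_iff.mp (hb k (Finset.mem_univ k))
      have h1 : (∑ k, σ2 / (σ2 + S * h k ^ 2)) = (K : ℝ) := by
        rw [← hS0']
        simp [hσ2.ne']
      have h2 : (∑ k, (g * h k * b k - 1) ^ 2) = (K : ℝ) := by
        have : ∀ k : Fin K, (g * h k * b k - 1) ^ 2 = 1 := by
          intro k; rw [hb' k]; ring
        simp [this]
      rw [h1, h2]
      nlinarith [sq_nonneg g]
    · -- S > 0
      have key : (∑ k, σ2 / (σ2 + S * h k ^ 2))
          ≤ ∑ k, ((g * h k * b k - 1) ^ 2 + (σ2 / S) * (g * b k) ^ 2) := by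
        apply Finset.sum_le_sum
        intro k _
        have hc : 0 < σ2 / S := by positivity
        have := aircomp_pointwise (σ2 / S) (h k) (g * b k) hc (hh k)
        have hden : h k ^ 2 + σ2 / S = (σ2 + S * h k ^ 2) / S := by
          field_simp; ring
        have hSne : S ≠ 0 := hSpos.ne'
        have hdne : (σ2 + S * h k ^ 2) ≠ 0 := by positivity
        have heq : (σ2 / S) / (h k ^ 2 + σ2 / S) = σ2 / (σ2 + S * h k ^ 2) := by
          rw [hden]
          field_simp
        rw [heq] at this
        calc σ2 / (σ2 + S * h k ^ 2)
            ≤ (h k * (g * b k) - 1) ^ 2 + (σ2 / S) * (g * b k) ^ 2 := this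
          _ = (g * h k * b k - 1) ^ 2 + (σ2 / S) * (g * b k) ^ 2 := by ring_nf
      have hsum : (∑ k, ((g * h k * b k - 1) ^ 2 + (σ2 / S) * (g * b k) ^ 2))
          = (∑ k, (g * h k * b k - 1) ^ 2) + σ2 * g ^ 2 := by
        rw [Finset.sum_add_distrib]
        congr 1
        calc (∑ k, (σ2 / S) * (g * b k) ^ 2)
            = (σ2 / S) * g ^ 2 * ∑ k, b k ^ 2 := by
              rw [Finset.mul_sum]
              apply Finset.sum_congr rfl
              intro k _; ring
          _ = σ2 * g ^ 2 := by
              rw [← hSdef]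
              field_simp
      rw [hsum] at key
      exact key
  -- strict monotonicity of the sum in S
  have hstrict : (∑ k, σ2 / (σ2 + P * h k ^ 2)) < ∑ k, σ2 / (σ2 + S * h k ^ 2) := by
    apply Finset.sum_lt_sum_of_nonempty hne'
    intro k _
    exact aircomp_mono σ2 S P (h k) hσ2 hS0 hSP (hh k)
  rw [hopt] at hlow
  exact absurd hlow (not_le.mpr hstrict)
end

section
/- Let c_1,…,c_K > 0 and ε > 0. The set D = { τ ∈ ℝ^K : ∑_{k=1}^K τ_k² < ε } is convex, and the function f(τ) = (∑_{k=1}^K c_k (1 − τ_k)²) / (ε − ∑_{k=1}^K τ_k²) is convex on D. -/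
/-!
The denominator `ε - ∑ k, τ k ^ 2` is concave and positive on `D`, and each summand of the
numerator is the square of an affine function of `τ`. The quadratic-over-linear function
`(x, t) ↦ x ^ 2 / t` is jointly convex on `t > 0` and nonincreasing in `t`, so composing it with
an affine numerator and a concave positive denominator gives a convex function; the objective is
a nonnegative combination of such functions.
-/

open Finset Set

lemma add_sq_div_add_le {A B : ℝ} (x y : ℝ) (hA : 0 < A) (hB : 0 < B) {a b : ℝ}
    (ha : 0 ≤ a) (hb : 0 ≤ b) :
    (a * x + b * y) ^ 2 / (a * A + b * B) ≤ a * (x ^ 2 / A) + b * (y ^ 2 / B) := by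
  have hrhs : 0 ≤ a * (x ^ 2 / A) + b * (y ^ 2 / B) := by positivity
  rcases (by positivity : 0 ≤ a * A + b * B).eq_or_lt with hD | hD
  · rwa [← hD, div_zero]
  rw [div_le_iff₀ hD]
  have hsplit : a * (x ^ 2 / A) + b * (y ^ 2 / B)
      = (a * (x ^ 2 * B) + b * (y ^ 2 * A)) / (A * B) := by
    field_simp
  rw [hsplit, div_mul_eq_mul_div, le_div_iff₀ (by positivity)]
  nlinarith [mul_nonneg (mul_nonneg ha hb) (sq_nonneg (B * x - A * y))]

section

variable {𝕜 E β : Type*} [Semiring 𝕜] [PartialOrder 𝕜] [AddCommMonoid E] [SMul 𝕜 E]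
  [AddCommMonoid β] [PartialOrder β] [IsOrderedAddMonoid β] [Module 𝕜 β] {s : Set E}

lemma ConvexOn.fun_sum {ι : Type*} {f : ι → E → β} (t : Finset ι) (hs : Convex 𝕜 s)
    (hf : ∀ i ∈ t, ConvexOn 𝕜 s (f i)) : ConvexOn 𝕜 s fun x => ∑ i ∈ t, f i x := by
  simp_rw [← Finset.sum_apply]
  exact Finset.sum_induction _ (ConvexOn 𝕜 s) (fun _ _ => ConvexOn.add) (convexOn_const 0 hs) hf

end

lemma convexOn_sum_sq (ι : Type*) [Fintype ι] :
    ConvexOn ℝ univ fun τ : ι → ℝ => ∑ k, τ k ^ 2 :=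
  ConvexOn.fun_sum _ convex_univ fun k _ => by
    exact (Even.convexOn_pow even_two).comp_linearMap
      (LinearMap.proj (R := ℝ) (φ := fun _ : ι => ℝ) k)

section

variable {E : Type*} [AddCommGroup E] [Module ℝ E] {s : Set E} {g : E → ℝ}

lemma ConcaveOn.convexOn_sq_div (hg : ConcaveOn ℝ s g) (hg₀ : ∀ x ∈ s, 0 < g x)
    (φ : E →ᵃ[ℝ] ℝ) : ConvexOn ℝ s fun x => φ x ^ 2 / g x := by
  refine ⟨hg.1, fun x hx y hy a b ha hb hab => ?_⟩
  have hmix : a * g x + b * g y ≤ g (a • x + b • y) := hg.2 hx hy ha hb hab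
  have hmix₀ : 0 < a * g x + b * g y := by
    rcases ha.eq_or_lt with rfl | ha₀
    · simpa [show b = 1 by linarith] using hg₀ y hy
    · exact add_pos_of_pos_of_nonneg (mul_pos ha₀ (hg₀ x hx)) (mul_nonneg hb (hg₀ y hy).le)
  simp only [Convex.combo_affine_apply hab, smul_eq_mul]
  calc (a * φ x + b * φ y) ^ 2 / g (a • x + b • y)
      ≤ (a * φ x + b * φ y) ^ 2 / (a * g x + b * g y) :=
        div_le_div_of_nonneg_left (sq_nonneg _) hmix₀ hmix
    _ ≤ a * (φ x ^ 2 / g x) + b * (φ y ^ 2 / g y) :=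
        add_sq_div_add_le _ _ (hg₀ x hx) (hg₀ y hy) ha hb

end

theorem aircomp_transformed_objective_convex_general (K : ℕ) (c : Fin K → ℝ)
    (hc : ∀ k, 0 < c k) (ε : ℝ) :
    Convex ℝ {τ : Fin K → ℝ | (∑ k, τ k ^ 2) < ε}
    ∧ ConvexOn ℝ {τ : Fin K → ℝ | (∑ k, τ k ^ 2) < ε}
        (fun τ : Fin K → ℝ =>
          (∑ k, c k * (1 - τ k) ^ 2) / (ε - ∑ k, τ k ^ 2)) := by
  set D := {τ : Fin K → ℝ | (∑ k, τ k ^ 2) < ε}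
  have hD : Convex ℝ D := by simpa using (convexOn_sum_sq (Fin K)).convex_lt ε
  have hden : ConcaveOn ℝ D fun τ => ε - ∑ k, τ k ^ 2 :=
    (concaveOn_const ε hD).sub ((convexOn_sum_sq (Fin K)).subset (subset_univ D) hD)
  have hden₀ : ∀ τ ∈ D, 0 < ε - ∑ k, τ k ^ 2 := fun τ hτ => sub_pos.2 hτ
  refine ⟨hD, ?_⟩
  have hterm (k : Fin K) : ConvexOn ℝ D fun τ => c k * ((1 - τ k) ^ 2 / (ε - ∑ k, τ k ^ 2)) :=
    (hden.convexOn_sq_div hden₀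
      (AffineMap.const ℝ _ (1 : ℝ) - (LinearMap.proj k).toAffineMap)).smul (hc k).le
  refine (ConvexOn.fun_sum univ hD fun k _ => hterm k).congr fun τ _ => ?_
  simp only [Finset.sum_div, mul_div_assoc]

/-- The set `D = {τ ∈ ℝ^K : ∑ k (τ k)² < ε}` is convex, and the function
`f τ = (∑ k c k (1 − τ k)²)/(ε − ∑ k (τ k)²)` is convex on `D`. -/
theorem aircomp_transformed_objective_convex (K : ℕ) (c : Fin K → ℝ)
    (hc : ∀ k, 0 < c k) (ε : ℝ) (hε : 0 < ε) :
    Convex ℝ {τ : Fin K → ℝ | (∑ k, τ k ^ 2) < ε}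
    ∧ ConvexOn ℝ {τ : Fin K → ℝ | (∑ k, τ k ^ 2) < ε}
        (fun τ : Fin K → ℝ =>
          (∑ k, c k * (1 - τ k) ^ 2) / (ε - ∑ k, τ k ^ 2)) :=
  aircomp_transformed_objective_convex_general K c hc ε
end

section
/- Let K ≥ 1, h_1,…,h_K > 0 and 0 < ε < K. Then there exists a unique M ∈ (0, ∞) satisfying ∑_{k=1}^K 1/(1 + M h_k²) = ε. Moreover, with c_k = 1/h_k², this M is exactly the positive solution of the fixed-point equation M = (∑_{k=1}^K c_k (M/(c_k + M))²) / (ε − ∑_{k=1}^K (c_k/(c_k + M))²), whose denominator is positive at that M; i.e., equation (19) of the paper has a unique solution in (0, ∞). -/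
/-- For `0 < ε < K` there is a unique `M ∈ (0, ∞)` with
`∑ k 1/(1 + M h k²) = ε`; moreover, with `c k = 1/h k²`, this `M` is exactly the positive
solution of the fixed-point equation
`M = (∑ k c k (M/(c k + M))²)/(ε − ∑ k (c k/(c k + M))²)` and its denominator is positive
there; i.e. equation (19) of the paper has a unique solution in `(0, ∞)`. -/
theorem aircomp_M_exists_unique (K : ℕ) (hK : 1 ≤ K) (h : Fin K → ℝ)
    (hh : ∀ k, 0 < h k) (ε : ℝ) (hε0 : 0 < ε) (hεK : ε < K)
    (c : Fin K → ℝ) (hc : ∀ k, c k = 1 / h k ^ 2) :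
    (∃! M : ℝ, 0 < M ∧ (∑ k, 1 / (1 + M * h k ^ 2)) = ε)
    ∧ (∀ M : ℝ, 0 < M → (∑ k, 1 / (1 + M * h k ^ 2)) = ε →
        0 < ε - (∑ k, (c k / (c k + M)) ^ 2)
        ∧ M = (∑ k, c k * (M / (c k + M)) ^ 2) / (ε - ∑ k, (c k / (c k + M)) ^ 2)) := by
  have hne : Nonempty (Fin K) := ⟨⟨0, hK⟩⟩
  set f : ℝ → ℝ := fun M => ∑ k, 1 / (1 + M * h k ^ 2) with hfdef
  have hpos : ∀ (M : ℝ), 0 ≤ M → ∀ k : Fin K, 0 < 1 + M * h k ^ 2 := by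
    intro M hM k
    have := hh k
    nlinarith [sq_nonneg (h k)]
  have hanti : ∀ M1 M2 : ℝ, 0 ≤ M1 → M1 < M2 → f M2 < f M1 := by
    intro M1 M2 h1 h12
    apply Finset.sum_lt_sum_of_nonempty Finset.univ_nonempty
    intro k _
    apply one_div_lt_one_div_of_lt (hpos M1 h1 k)
    have : 0 < h k ^ 2 := pow_pos (hh k) 2
    nlinarith
  have hf0 : f 0 = K := by simp [hfdef]
  set M0 : ℝ := (∑ k, 1 / h k ^ 2) / ε + 1 with hM0def
  have hcsum : 0 ≤ ∑ k, 1 / h k ^ 2 :=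
    Finset.sum_nonneg fun k _ => by positivity
  have hM0pos : 0 < M0 := by
    rw [hM0def]
    have : 0 ≤ (∑ k, 1 / h k ^ 2) / ε := by positivity
    linarith
  have hfM0 : f M0 < ε := by
    have hle : f M0 ≤ (∑ k, 1 / h k ^ 2) / M0 := by
      rw [hfdef]
      simp only [Finset.sum_div]
      apply Finset.sum_le_sum
      intro k _
      rw [div_div]
      apply one_div_le_one_div_of_le (mul_pos (pow_pos (hh k) 2) hM0pos)
      nlinarith [hh k, sq_nonneg (h k), hM0pos]
    have h2 : (∑ k, 1 / h k ^ 2) / M0 < ε := by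
      rw [div_lt_iff₀ hM0pos]
      have : ε * M0 = (∑ k, 1 / h k ^ 2) + ε := by
        rw [hM0def]; field_simp
      rw [this]; linarith
    linarith
  have hcont : ContinuousOn f (Set.Icc 0 M0) := by
    apply continuousOn_finset_sum
    intro k _
    apply ContinuousOn.div continuousOn_const
    · fun_prop
    · intro M hM
      exact ne_of_gt (hpos M hM.1 k)
  have hmem : ε ∈ Set.Icc (f M0) (f 0) := ⟨le_of_lt hfM0, by rw [hf0]; exact le_of_lt hεK⟩
  obtain ⟨M, hMmem, hMeq⟩ := intermediate_value_Icc' (le_of_lt hM0pos) hcont hmem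
  have hMpos : 0 < M := by
    rcases lt_or_eq_of_le hMmem.1 with h' | h'
    · exact h'
    · exfalso; rw [← h'] at hMeq; rw [hf0] at hMeq; linarith
  have huniq : ∀ y : ℝ, 0 < y ∧ f y = ε → y = M := by
    rintro y ⟨hy, hyeq⟩
    by_contra hne'
    rcases lt_or_gt_of_ne hne' with h' | h'
    · have := hanti y M (le_of_lt hy) h'; rw [hyeq, hMeq] at this; linarith
    · have := hanti M y (le_of_lt hMpos) h'; rw [hyeq, hMeq] at this; linarith
  constructor
  · exact ⟨M, ⟨hMpos, hMeq⟩, huniq⟩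
  · intro M' hM' heq
    have hck : ∀ k : Fin K, 0 < c k := by
      intro k; rw [hc k]; exact one_div_pos.mpr (pow_pos (hh k) 2)
    have hckM : ∀ k : Fin K, 0 < c k + M' := fun k => by linarith [hck k]
    have htau : ∀ k : Fin K, c k / (c k + M') = 1 / (1 + M' * h k ^ 2) := by
      intro k
      rw [hc k]
      have hk := (hh k).ne'
      field_simp
    have htau01 : ∀ k : Fin K, 0 < c k / (c k + M') ∧ c k / (c k + M') < 1 := by
      intro k
      constructor
      · exact div_pos (hck k) (hckM k)
      · rw [div_lt_one (hckM k)]; linarith [hck k]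
    have hsum : ∑ k, c k / (c k + M') = ε := by
      rw [← heq]; exact Finset.sum_congr rfl fun k _ => htau k
    have hD : 0 < ε - ∑ k, (c k / (c k + M')) ^ 2 := by
      rw [← hsum, ← Finset.sum_sub_distrib]
      apply Finset.sum_pos _ Finset.univ_nonempty
      intro k _
      obtain ⟨h1, h2⟩ := htau01 k
      nlinarith
    refine ⟨hD, ?_⟩
    have hN : ∑ k, c k * (M' / (c k + M')) ^ 2
        = M' * (ε - ∑ k, (c k / (c k + M')) ^ 2) := by
      rw [← hsum, ← Finset.sum_sub_distrib, Finset.mul_sum]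
      apply Finset.sum_congr rfl
      intro k _
      have hne2 := (hckM k).ne'
      field_simp
      ring
    rw [hN, mul_div_assoc, div_self (ne_of_gt hD), mul_one]
end

section
/- Let K ≥ 1, h_1,…,h_K > 0, 0 < ε < K, c_k = 1/h_k², and let M > 0 be the unique positive real with ∑_{k=1}^K 1/(1 + M h_k²) = ε. Set τ*_k = c_k/(c_k + M) = 1/(1 + M h_k²). Then 0 < τ*_k < 1 for all k, ∑_{k=1}^K (τ*_k)² < ε, and M is the least element of the set { (∑_{k=1}^K c_k (1 − τ_k)²)/(ε − ∑_{k=1}^K τ_k²) : τ ∈ ℝ^K, ∑_{k=1}^K τ_k² < ε }, attained at τ = τ*. In particular the minimum of f over { τ : ∑ τ_k² < ε, 0 < τ_k < 1 ∀k } is also M, attained at τ*. -/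
/-- With `c k = 1/h k²` and `M > 0` the unique solution of
`∑ k 1/(1 + M h k²) = ε`, the point `τ* k = c k/(c k + M) = 1/(1 + M h k²)` satisfies
`0 < τ* k < 1` and `∑ k (τ* k)² < ε`, and `M` is the least value of
`f τ = (∑ k c k (1 − τ k)²)/(ε − ∑ k (τ k)²)` over `{τ : ∑ k (τ k)² < ε}`, attained at
`τ*`; in particular the minimum of `f` over the smaller region with additionally
`0 < τ k < 1` for all `k` is also `M`, attained at `τ*`. -/
theorem aircomp_transformed_min (K : ℕ) (hK : 1 ≤ K) (h : Fin K → ℝ)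
    (hh : ∀ k, 0 < h k) (ε : ℝ) (hε0 : 0 < ε) (hεK : ε < K)
    (c : Fin K → ℝ) (hc : ∀ k, c k = 1 / h k ^ 2)
    (M : ℝ) (hM : 0 < M) (hMε : (∑ k, 1 / (1 + M * h k ^ 2)) = ε)
    (τstar : Fin K → ℝ) (hτstar : ∀ k, τstar k = c k / (c k + M)) :
    (∀ k, τstar k = 1 / (1 + M * h k ^ 2))
    ∧ (∀ k, 0 < τstar k ∧ τstar k < 1)
    ∧ (∑ k, τstar k ^ 2) < ε
    ∧ IsLeast {m : ℝ | ∃ τ : Fin K → ℝ, (∑ k, τ k ^ 2) < ε ∧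
        m = (∑ k, c k * (1 - τ k) ^ 2) / (ε - ∑ k, τ k ^ 2)} M
    ∧ M = (∑ k, c k * (1 - τstar k) ^ 2) / (ε - ∑ k, τstar k ^ 2)
    ∧ IsLeast {m : ℝ | ∃ τ : Fin K → ℝ, (∑ k, τ k ^ 2) < ε ∧ (∀ k, 0 < τ k ∧ τ k < 1) ∧
        m = (∑ k, c k * (1 - τ k) ^ 2) / (ε - ∑ k, τ k ^ 2)} M := by
  have hc' : ∀ k, 0 < c k := by
    intro k; have := hh k; rw [hc]; positivity
  have hcM : ∀ k, 0 < c k + M := fun k => by linarith [hc' k]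
  -- τ* k = 1/(1 + M h k²)
  have hts : ∀ k, τstar k = 1 / (1 + M * h k ^ 2) := by
    intro k
    have hk := (hh k).ne'
    have h1 : (1 : ℝ) / h k ^ 2 + M ≠ 0 := by positivity
    have h2 : (1 : ℝ) + M * h k ^ 2 ≠ 0 := by positivity
    rw [hτstar, hc]
    field_simp
  -- 0 < τ* < 1
  have hts01 : ∀ k, 0 < τstar k ∧ τstar k < 1 := by
    intro k
    have hd : (0 : ℝ) < 1 + M * h k ^ 2 := by positivity
    rw [hts k]
    constructor
    · positivity
    · rw [div_lt_one hd]
      nlinarith [mul_pos hM (pow_pos (hh k) 2)]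
  -- ∑ τ* = ε
  have hsum : ∑ k, τstar k = ε := by
    rw [← hMε]; exact Finset.sum_congr rfl fun k _ => hts k
  have hne : (Finset.univ : Finset (Fin K)).Nonempty :=
    ⟨⟨0, hK⟩, Finset.mem_univ _⟩
  -- ∑ τ*² < ε
  have hsq : (∑ k, τstar k ^ 2) < ε := by
    rw [← hsum]
    refine Finset.sum_lt_sum_of_nonempty hne ?_
    intro k _
    obtain ⟨h0, h1⟩ := hts01 k
    nlinarith
  have hgap : 0 < ε - ∑ k, τstar k ^ 2 := by linarith
  -- τ* (c + M) = c
  have he : ∀ k, τstar k * (c k + M) = c k := by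
    intro k
    rw [hτstar, div_mul_cancel₀ _ (hcM k).ne']
  -- key pointwise inequality
  have key : ∀ (τ : Fin K → ℝ) (k : Fin K),
      M * τstar k ≤ c k * (1 - τ k) ^ 2 + M * τ k ^ 2 := by
    intro τ k
    have hprod : 0 ≤ (c k + M) * (τ k - τstar k) ^ 2 :=
      mul_nonneg (hcM k).le (sq_nonneg _)
    have hid : c k * (1 - τ k) ^ 2 + M * τ k ^ 2 - M * τstar k
        = (c k + M) * (τ k - τstar k) ^ 2 := by
      linear_combination (2 * τ k - τstar k - 1) * he k
    linarith
  -- equality at τ*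
  have eqstar : ∀ k, c k * (1 - τstar k) ^ 2 + M * τstar k ^ 2 = M * τstar k := by
    intro k
    linear_combination (τstar k - 1) * he k
  -- lower bound on numerator
  have lb : ∀ τ : Fin K → ℝ,
      M * ε - M * ∑ k, τ k ^ 2 ≤ ∑ k, c k * (1 - τ k) ^ 2 := by
    intro τ
    have h1 : ∑ k, M * τstar k ≤ ∑ k, (c k * (1 - τ k) ^ 2 + M * τ k ^ 2) :=
      Finset.sum_le_sum fun k _ => key τ k
    rw [← Finset.mul_sum, hsum, Finset.sum_add_distrib, ← Finset.mul_sum] at h1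
    linarith
  -- value at τ*
  have hval : ∑ k, c k * (1 - τstar k) ^ 2 = M * (ε - ∑ k, τstar k ^ 2) := by
    have h1 : ∑ k, (c k * (1 - τstar k) ^ 2 + M * τstar k ^ 2) = ∑ k, M * τstar k :=
      Finset.sum_congr rfl fun k _ => eqstar k
    rw [Finset.sum_add_distrib, ← Finset.mul_sum, ← Finset.mul_sum, hsum] at h1
    linarith
  have Mstar : M = (∑ k, c k * (1 - τstar k) ^ 2) / (ε - ∑ k, τstar k ^ 2) := by
    rw [hval, mul_div_assoc, div_self hgap.ne', mul_one]
  have lbset : ∀ (τ : Fin K → ℝ), (∑ k, τ k ^ 2) < ε →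
      M ≤ (∑ k, c k * (1 - τ k) ^ 2) / (ε - ∑ k, τ k ^ 2) := by
    intro τ hτ
    rw [le_div_iff₀ (by linarith)]
    have := lb τ
    nlinarith
  refine ⟨hts, hts01, hsq, ⟨⟨τstar, hsq, Mstar⟩, ?_⟩, Mstar,
    ⟨⟨τstar, hsq, hts01, Mstar⟩, ?_⟩⟩
  · rintro m ⟨τ, hτ, rfl⟩
    exact lbset τ hτ
  · rintro m ⟨τ, hτ, -, rfl⟩
    exact lbset τ hτ
end

section
/- Let K ≥ 1, h_1,…,h_K > 0, σ > 0, 0 < ε < K, and let M > 0 be the unique positive real with ∑_{k=1}^K 1/(1 + M h_k²) = ε. Define g* = (1/σ)·sqrt(ε − ∑_{k=1}^K (1/(1 + M h_k²))²) and b*_k = σ M h_k / ((1 + M h_k²)·sqrt(ε − ∑_{j=1}^K (1/(1 + M h_j²))²)). Then ∑_{k=1}^K (g* h_k b*_k − 1)² + σ² (g*)² = ε and ∑_{k=1}^K (b*_k)² = σ² M; moreover σ² M equals the closed-form value σ² (∑_{k=1}^K (1 − 1/(1 + M h_k²))²/h_k²) / (ε − ∑_{k=1}^K (1/(1 + M h_k²))²).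 -/
/-! With `p_k = 1/(1 + M h_k²)` and `u_k = M h_k/(1 + M h_k²)` one has `h_k u_k = 1 - p_k` and
`u_k² = M (p_k - p_k²) = (1 - p_k)²/h_k²`. Since `b* = (σ/R) u` and `g* = R/σ` with
`R² = ε - ∑ p_k²`, every claimed quantity reduces to `∑ (p_k - p_k²) = ε - ∑ p_k²`, which is the
defining equation of `M`. The square root `R` is positive because `0 < p_k < 1` forces
`∑ p_k² < ∑ p_k = ε`. -/

open Finset

theorem Finset.sum_sq_lt_sum_of_mem_Ioo {ι : Type*} [Fintype ι] [Nonempty ι] {p : ι → ℝ}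
    (hp : ∀ i, p i ∈ Set.Ioo 0 1) : ∑ i, p i ^ 2 < ∑ i, p i :=
  sum_lt_sum_of_nonempty univ_nonempty fun i _ => by
    obtain ⟨hp0, hp1⟩ := hp i
    nlinarith

section

variable {M x : ℝ}

lemma one_div_one_add_mul_sq_mem_Ioo (hM : 0 < M) (hx : x ≠ 0) :
    1 / (1 + M * x ^ 2) ∈ Set.Ioo 0 1 := by
  have hMx : 0 < M * x ^ 2 := by positivity
  exact ⟨by positivity, (div_lt_one (by positivity)).2 (by linarith)⟩

lemma mul_mul_div_one_add_mul_sq (hM : 0 ≤ M) :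
    x * (M * x / (1 + M * x ^ 2)) = 1 - 1 / (1 + M * x ^ 2) := by
  field_simp
  ring

lemma mul_div_one_add_mul_sq_sq (hM : 0 ≤ M) :
    (M * x / (1 + M * x ^ 2)) ^ 2 = M * (1 / (1 + M * x ^ 2) - (1 / (1 + M * x ^ 2)) ^ 2) := by
  field_simp
  ring

lemma one_sub_one_div_one_add_mul_sq_sq_div (hM : 0 ≤ M) (hx : x ≠ 0) :
    (1 - 1 / (1 + M * x ^ 2)) ^ 2 / x ^ 2 = (M * x / (1 + M * x ^ 2)) ^ 2 := by
  rw [← mul_mul_div_one_add_mul_sq hM, mul_pow, mul_div_cancel_left₀ _ (pow_ne_zero 2 hx)]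

end

theorem aircomp_theorem2_attainment_general (K : ℕ) (hK : 1 ≤ K) (h : Fin K → ℝ)
    (hh : ∀ k, 0 < h k) (σ : ℝ) (hσ : 0 < σ) (ε : ℝ)
    (M : ℝ) (hM : 0 < M) (hMε : (∑ k, 1 / (1 + M * h k ^ 2)) = ε)
    (gstar : ℝ) (bstar : Fin K → ℝ)
    (hg : gstar = (1 / σ) * Real.sqrt (ε - ∑ k, (1 / (1 + M * h k ^ 2)) ^ 2))
    (hb : ∀ k, bstar k = σ * M * h k /
        ((1 + M * h k ^ 2) * Real.sqrt (ε - ∑ j, (1 / (1 + M * h j ^ 2)) ^ 2))) :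
    (∑ k, (gstar * h k * bstar k - 1) ^ 2) + σ ^ 2 * gstar ^ 2 = ε
    ∧ (∑ k, bstar k ^ 2) = σ ^ 2 * M
    ∧ σ ^ 2 * M = σ ^ 2 * (∑ k, (1 - 1 / (1 + M * h k ^ 2)) ^ 2 / h k ^ 2)
        / (ε - ∑ k, (1 / (1 + M * h k ^ 2)) ^ 2) := by
  have : Nonempty (Fin K) := ⟨⟨0, hK⟩⟩
  set S := ∑ k, (1 / (1 + M * h k ^ 2)) ^ 2
  have hgap : 0 < ε - S := sub_pos.2 <| hMε ▸ sum_sq_lt_sum_of_mem_Ioo fun k =>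
    one_div_one_add_mul_sq_mem_Ioo hM (hh k).ne'
  set R := Real.sqrt (ε - S)
  have hR : R ^ 2 = ε - S := Real.sq_sqrt hgap.le
  have hR0 : R ≠ 0 := (Real.sqrt_pos.2 hgap).ne'
  have hb' : ∀ k, bstar k = σ / R * (M * h k / (1 + M * h k ^ 2)) := fun k => by
    rw [hb]
    field_simp
  have hgb : ∀ k, gstar * h k * bstar k = 1 - 1 / (1 + M * h k ^ 2) := fun k => by
    rw [hg, hb', ← mul_mul_div_one_add_mul_sq hM.le]
    field_simp
  have hu : ∑ k, (M * h k / (1 + M * h k ^ 2)) ^ 2 = M * (ε - S) := by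
    simp_rw [mul_div_one_add_mul_sq_sq hM.le, ← mul_sum, sum_sub_distrib, hMε]
    rfl
  refine ⟨?_, ?_, ?_⟩
  · have hmse : ∑ k, (gstar * h k * bstar k - 1) ^ 2 = S :=
      sum_congr rfl fun k _ => by rw [hgb, sub_sub_cancel_left, neg_sq]
    rw [hmse, hg, mul_pow, hR]
    field_simp
    ring
  · simp_rw [hb', mul_pow, ← mul_sum, hu, div_pow, hR]
    field_simp
  · simp_rw [one_sub_one_div_one_add_mul_sq_sq_div hM.le (hh _).ne', hu]
    field_simp

/-- With `M > 0` the unique solution of `∑ k 1/(1 + M h k²) = ε`, the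
scaling factors `g* = (1/σ)·sqrt(ε − ∑ k (1/(1 + M h k²))²)` and
`b* k = σ M h k/((1 + M h k²)·sqrt(ε − ∑ j (1/(1 + M h j²))²))` of Theorem 2 satisfy
`MSE(g*, b*) = ε` and `∑ k (b* k)² = σ² M`, and `σ² M` equals the closed-form value
`σ² (∑ k (1 − 1/(1 + M h k²))²/h k²)/(ε − ∑ k (1/(1 + M h k²))²)`. -/
theorem aircomp_theorem2_attainment (K : ℕ) (hK : 1 ≤ K) (h : Fin K → ℝ)
    (hh : ∀ k, 0 < h k) (σ : ℝ) (hσ : 0 < σ) (ε : ℝ) (hε0 : 0 < ε) (hεK : ε < K)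
    (M : ℝ) (hM : 0 < M) (hMε : (∑ k, 1 / (1 + M * h k ^ 2)) = ε)
    (gstar : ℝ) (bstar : Fin K → ℝ)
    (hg : gstar = (1 / σ) * Real.sqrt (ε - ∑ k, (1 / (1 + M * h k ^ 2)) ^ 2))
    (hb : ∀ k, bstar k = σ * M * h k /
        ((1 + M * h k ^ 2) * Real.sqrt (ε - ∑ j, (1 / (1 + M * h j ^ 2)) ^ 2))) :
    (∑ k, (gstar * h k * bstar k - 1) ^ 2) + σ ^ 2 * gstar ^ 2 = ε
    ∧ (∑ k, bstar k ^ 2) = σ ^ 2 * M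
    ∧ σ ^ 2 * M = σ ^ 2 * (∑ k, (1 - 1 / (1 + M * h k ^ 2)) ^ 2 / h k ^ 2)
        / (ε - ∑ k, (1 / (1 + M * h k ^ 2)) ^ 2) :=
  aircomp_theorem2_attainment_general K hK h hh σ hσ ε M hM hMε gstar bstar hg hb
end

section
/- (Theorem 2) Let K ≥ 1, h_1,…,h_K > 0, σ² > 0, 0 < ε < K, and let M > 0 be the unique positive real with ∑_{k=1}^K 1/(1 + M h_k²) = ε. Then σ² M is the least element of the set { ∑_{k=1}^K b_k² : g ∈ ℝ, b ∈ ℝ^K, ∑_{k=1}^K (g h_k b_k − 1)² + σ² g² ≤ ε }; i.e., every (g, b) meeting the MSE constraint has sum power at least σ² M, and sum power σ² M is attained (at g* = (1/σ)·sqrt(ε − ∑_k (1/(1+M h_k²))²) and b*_k = σ M h_k/((1+M h_k²)·sqrt(ε − ∑_j (1/(1+M h_j²))²))). -/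
/-!
Write `c_k = 1 / (1 + M h_k²) ∈ (0, 1]`, so that `∑ c_k = ε` and `M ∑ h_k² c_k² = ∑ c_k - ∑ c_k²`;
since `ε < K`, some `c_k < 1` and hence `∑ c_k² < ε`.
For a multiplier `ℓ ≥ 0`, minimising `b² + ℓ (a b - 1)²` over `b` gives `ℓ / (1 + ℓ a²)`, and
the tangent line of the convex map `t ↦ 1 / (1 + t)` at `t = M h_k²` bounds this from below by
an expression linear in `ℓ g² h_k²`. Summing over `k` with the Lagrange multiplier
`ℓ = σ² M / (ε - ∑ c_k²)` turns the MSE constraint into `∑ b_k² ≥ σ² M`. Equality holds when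
`g h_k b_k - 1 = -c_k` for every `k` and `σ² g² = ε - ∑ c_k²`, which is the stated optimum.
-/

open Finset

theorem div_one_add_mul_sq_le_sq_add_mul_sq {ℓ : ℝ} (hℓ : 0 ≤ ℓ) (a b : ℝ) :
    ℓ / (1 + ℓ * a ^ 2) ≤ b ^ 2 + ℓ * (a * b - 1) ^ 2 := by
  rw [div_le_iff₀ (by positivity)]
  nlinarith [sq_nonneg (b + ℓ * a * (a * b - 1))]

theorem one_div_one_add_sub_le_one_div_one_add {s t : ℝ} (hs : 1 + s ≠ 0) (ht : 0 < 1 + t) :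
    1 / (1 + s) - (t - s) / (1 + s) ^ 2 ≤ 1 / (1 + t) := by
  rw [show 1 / (1 + s) - (t - s) / (1 + s) ^ 2 = (1 + 2 * s - t) / (1 + s) ^ 2 by
    field_simp; ring, div_le_div_iff₀ (by positivity) ht]
  nlinarith [sq_nonneg (t - s)]

theorem tangent_bound_le_sq_add_mul_sq {ℓ M : ℝ} (hℓ : 0 ≤ ℓ) (hM : 0 ≤ M) (g x b : ℝ) :
    ℓ * (1 / (1 + M * x ^ 2) - (ℓ * g ^ 2 - M) * (x ^ 2 * (1 / (1 + M * x ^ 2)) ^ 2))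
      ≤ b ^ 2 + ℓ * (g * x * b - 1) ^ 2 := by
  have hs : 1 + M * x ^ 2 ≠ 0 := by positivity
  have ht : 0 < 1 + ℓ * (g * x) ^ 2 := by positivity
  calc ℓ * (1 / (1 + M * x ^ 2) - (ℓ * g ^ 2 - M) * (x ^ 2 * (1 / (1 + M * x ^ 2)) ^ 2))
      = ℓ * (1 / (1 + M * x ^ 2) - (ℓ * (g * x) ^ 2 - M * x ^ 2) / (1 + M * x ^ 2) ^ 2) := by
        field_simp
    _ ≤ ℓ * (1 / (1 + ℓ * (g * x) ^ 2)) :=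
        mul_le_mul_of_nonneg_left (one_div_one_add_sub_le_one_div_one_add hs ht) hℓ
    _ = ℓ / (1 + ℓ * (g * x) ^ 2) := mul_one_div ℓ _
    _ ≤ b ^ 2 + ℓ * (g * x * b - 1) ^ 2 := div_one_add_mul_sq_le_sq_add_mul_sq hℓ _ b

theorem sum_sq_lt_sum_of_sum_lt_card {ι : Type*} [Fintype ι] {c : ι → ℝ}
    (hpos : ∀ k, 0 < c k) (hle : ∀ k, c k ≤ 1) (hlt : ∑ k, c k < Fintype.card ι) :
    ∑ k, c k ^ 2 < ∑ k, c k := by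
  rw [← sub_pos, ← sum_sub_distrib]
  obtain ⟨k, -, hk⟩ : ∃ k ∈ univ, c k < 1 := by
    refine exists_lt_of_sum_lt ?_
    simpa using hlt
  refine sum_pos' (fun j _ => ?_) ⟨k, mem_univ k, ?_⟩
  · nlinarith [hpos j, hle j]
  · nlinarith [hpos k]

section

variable {ι : Type*} [Fintype ι] (h : ι → ℝ) {M : ℝ}

theorem mul_sum_sq_mul_sq_eq (hM : 0 ≤ M) :
    M * ∑ k, h k ^ 2 * (1 / (1 + M * h k ^ 2)) ^ 2
      = ∑ k, 1 / (1 + M * h k ^ 2) - ∑ k, (1 / (1 + M * h k ^ 2)) ^ 2 := by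
  rw [mul_sum, ← sum_sub_distrib]
  refine sum_congr rfl fun k _ => ?_
  have : 1 + M * h k ^ 2 ≠ 0 := by positivity
  field_simp
  ring

theorem sq_mul_le_sum_sq_of_mse_le (hM : 0 ≤ M) {ε : ℝ}
    (hMε : ∑ k, 1 / (1 + M * h k ^ 2) = ε) (hslack : ∑ k, (1 / (1 + M * h k ^ 2)) ^ 2 < ε)
    {g σ : ℝ} {b : ι → ℝ} (hmse : ∑ k, (g * h k * b k - 1) ^ 2 + σ ^ 2 * g ^ 2 ≤ ε) :
    σ ^ 2 * M ≤ ∑ k, b k ^ 2 := by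
  set S := ∑ k, (1 / (1 + M * h k ^ 2)) ^ 2
  set T := ∑ k, h k ^ 2 * (1 / (1 + M * h k ^ 2)) ^ 2
  have hMT : M * T = ε - S := hMε ▸ mul_sum_sq_mul_sq_eq h hM
  set ℓ := σ ^ 2 * M / (ε - S)
  have hℓ : 0 ≤ ℓ := div_nonneg (by positivity) (sub_pos.2 hslack).le
  have hℓT : ℓ * T = σ ^ 2 := by
    rw [div_mul_eq_mul_div, mul_assoc, hMT, mul_div_cancel_right₀ _ (sub_pos.2 hslack).ne']
  have hsum := sum_le_sum fun k (_ : k ∈ univ) => tangent_bound_le_sq_add_mul_sq hℓ hM g (h k) (b k)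
  rw [← mul_sum, sum_sub_distrib, ← mul_sum, hMε, sum_add_distrib, ← mul_sum] at hsum
  linear_combination hsum + mul_le_mul_of_nonneg_left hmse hℓ + (ℓ * g ^ 2 - M) * hℓT

theorem mse_at_optimum_eq {σ D ε : ℝ} (hσ : σ ≠ 0) (hD : D ≠ 0)
    (hDε : D ^ 2 = ε - ∑ k, (1 / (1 + M * h k ^ 2)) ^ 2) (hM : 0 ≤ M) :
    ∑ k, ((1 / σ * D) * h k * (σ * M * h k / ((1 + M * h k ^ 2) * D)) - 1) ^ 2
      + σ ^ 2 * (1 / σ * D) ^ 2 = ε := by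
  have hterm : ∀ k, (1 / σ * D) * h k * (σ * M * h k / ((1 + M * h k ^ 2) * D)) - 1
      = -(1 / (1 + M * h k ^ 2)) := fun k => by
    have : 1 + M * h k ^ 2 ≠ 0 := by positivity
    field_simp
    ring
  simp only [hterm, neg_sq]
  rw [show σ ^ 2 * (1 / σ * D) ^ 2 = D ^ 2 by field_simp, hDε]
  ring

theorem sum_sq_at_optimum_eq {σ D ε : ℝ} (hD : D ≠ 0) (hM : 0 ≤ M)
    (hMε : ∑ k, 1 / (1 + M * h k ^ 2) = ε)
    (hDε : D ^ 2 = ε - ∑ k, (1 / (1 + M * h k ^ 2)) ^ 2) :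
    ∑ k, (σ * M * h k / ((1 + M * h k ^ 2) * D)) ^ 2 = σ ^ 2 * M := by
  have hterm : ∀ k, (σ * M * h k / ((1 + M * h k ^ 2) * D)) ^ 2
      = σ ^ 2 * M / D ^ 2 * (M * (h k ^ 2 * (1 / (1 + M * h k ^ 2)) ^ 2)) := fun k => by
    have : 1 + M * h k ^ 2 ≠ 0 := by positivity
    field_simp
  rw [sum_congr rfl fun k _ => hterm k, ← mul_sum, ← mul_sum, mul_sum_sq_mul_sq_eq h hM, hMε,
    ← hDε, div_mul_cancel₀ _ (pow_ne_zero 2 hD)]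

end

theorem aircomp_theorem2_general (K : ℕ) (h : Fin K → ℝ)
    (σ : ℝ) (hσ : 0 < σ) (ε : ℝ) (hεK : ε < K)
    (M : ℝ) (hM : 0 < M) (hMε : (∑ k, 1 / (1 + M * h k ^ 2)) = ε) :
    IsLeast {pw : ℝ | ∃ (g : ℝ) (b : Fin K → ℝ),
        (∑ k, (g * h k * b k - 1) ^ 2) + σ ^ 2 * g ^ 2 ≤ ε ∧ pw = ∑ k, b k ^ 2}
      (σ ^ 2 * M)
    ∧ (∑ k, (((1 / σ) * Real.sqrt (ε - ∑ j, (1 / (1 + M * h j ^ 2)) ^ 2)) * h k *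
          (σ * M * h k / ((1 + M * h k ^ 2) *
            Real.sqrt (ε - ∑ j, (1 / (1 + M * h j ^ 2)) ^ 2))) - 1) ^ 2)
        + σ ^ 2 * ((1 / σ) * Real.sqrt (ε - ∑ j, (1 / (1 + M * h j ^ 2)) ^ 2)) ^ 2 ≤ ε
    ∧ (∑ k, (σ * M * h k / ((1 + M * h k ^ 2) *
          Real.sqrt (ε - ∑ j, (1 / (1 + M * h j ^ 2)) ^ 2))) ^ 2) = σ ^ 2 * M := by
  have hslack : ∑ k, (1 / (1 + M * h k ^ 2)) ^ 2 < ε := hMε ▸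
    sum_sq_lt_sum_of_sum_lt_card (fun k => by positivity)
      (fun k => div_le_one_of_le₀ (by nlinarith [sq_nonneg (h k)]) (by positivity))
      (by rwa [Fintype.card_fin, hMε])
  set D := Real.sqrt (ε - ∑ j, (1 / (1 + M * h j ^ 2)) ^ 2)
  have hD : D ≠ 0 := (Real.sqrt_pos.2 (sub_pos.2 hslack)).ne'
  have hDε : D ^ 2 = ε - ∑ j, (1 / (1 + M * h j ^ 2)) ^ 2 := Real.sq_sqrt (sub_pos.2 hslack).le
  have hmse := mse_at_optimum_eq h hσ.ne' hD hDε hM.le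
  have hpower := sum_sq_at_optimum_eq (σ := σ) h hD hM.le hMε hDε
  refine ⟨⟨⟨_, _, hmse.le, hpower.symm⟩, ?_⟩, hmse.le, hpower⟩
  rintro _ ⟨g, b, hgb, rfl⟩
  exact sq_mul_le_sum_sq_of_mse_le h hM.le hMε hslack hgb

/-- **Theorem 2.** With `M > 0` the unique solution of
`∑ k 1/(1 + M h k²) = ε`, the value `σ² M` is the least element of the set of achievable
sum powers `∑ k (b k)²` under the MSE constraint
`∑ k (g h k b k − 1)² + σ² g² ≤ ε`, attained at
`g* = (1/σ)·sqrt(ε − ∑ k (1/(1 + M h k²))²)` and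
`b* k = σ M h k/((1 + M h k²)·sqrt(ε − ∑ j (1/(1 + M h j²))²))`. -/
theorem aircomp_theorem2 (K : ℕ) (hK : 1 ≤ K) (h : Fin K → ℝ) (hh : ∀ k, 0 < h k)
    (σ : ℝ) (hσ : 0 < σ) (ε : ℝ) (hε0 : 0 < ε) (hεK : ε < K)
    (M : ℝ) (hM : 0 < M) (hMε : (∑ k, 1 / (1 + M * h k ^ 2)) = ε) :
    IsLeast {pw : ℝ | ∃ (g : ℝ) (b : Fin K → ℝ),
        (∑ k, (g * h k * b k - 1) ^ 2) + σ ^ 2 * g ^ 2 ≤ ε ∧ pw = ∑ k, b k ^ 2}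
      (σ ^ 2 * M)
    ∧ (∑ k, (((1 / σ) * Real.sqrt (ε - ∑ j, (1 / (1 + M * h j ^ 2)) ^ 2)) * h k *
          (σ * M * h k / ((1 + M * h k ^ 2) *
            Real.sqrt (ε - ∑ j, (1 / (1 + M * h j ^ 2)) ^ 2))) - 1) ^ 2)
        + σ ^ 2 * ((1 / σ) * Real.sqrt (ε - ∑ j, (1 / (1 + M * h j ^ 2)) ^ 2)) ^ 2 ≤ ε
    ∧ (∑ k, (σ * M * h k / ((1 + M * h k ^ 2) *
          Real.sqrt (ε - ∑ j, (1 / (1 + M * h j ^ 2)) ^ 2))) ^ 2) = σ ^ 2 * M :=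
  aircomp_theorem2_general K h σ hσ ε hεK M hM hMε
end
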